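/- arXiv:0801.4867 — 2 statements merged into one kernel-verified Lean document; each statement's English description precedes it below -/
import Mathlib

section
/- Define the sequence p_0 = p and p_{k+1} = (15/2)p_k^2 - (25/2)p_k^3 + (15/2)p_k^4 - (3/2)p_k^5. Then for every k ≥ 1 and every p with 0 < p ≤ 1, p_k < (2/15)·((15/2)p)^{2^k}. -/
/-!
The level map `f` sends `(0, 1]` into itself and satisfies `(15/2) f(q) < ((15/2) q)²` for `q > 0`.
So `r_k = (15/2) p_k` is a positive sequence with `r_{k+1} < r_k²`, whence `r_k < r_0 ^ 2^k` for `k ≥ 1`.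
-/

open Set

/-- The paper's `f`: one more level of concatenation turns the depolarizing parameter `q` into `f q`. -/
noncomputable def fiveQubitLevelMap (q : ℝ) : ℝ :=
  (15/2) * q^2 - (25/2) * q^3 + (15/2) * q^4 - (3/2) * q^5

section LevelMap

variable {q : ℝ}

theorem fiveQubitLevelMap_pos (hq0 : 0 < q) (hq1 : q ≤ 1) : 0 < fiveQubitLevelMap q := by
  have hcofactor : 0 < 3 * (1 - q)^3 + 6 * (q - 4/3)^2 + 4/3 := by
    have := pow_nonneg (sub_nonneg.mpr hq1) 3
    positivity
  have hfactor : fiveQubitLevelMap q = q^2 / 2 * (3 * (1 - q)^3 + 6 * (q - 4/3)^2 + 4/3) := by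
    unfold fiveQubitLevelMap; ring
  rw [hfactor]
  exact mul_pos (by positivity) hcofactor

theorem fiveQubitLevelMap_le_one (hq0 : 0 ≤ q) (hq1 : q ≤ 1) : fiveQubitLevelMap q ≤ 1 := by
  have hfactor : 1 - fiveQubitLevelMap q = (1 - q)^3 * (2 + 6 * q - 3 * q^2) / 2 := by
    unfold fiveQubitLevelMap; ring
  have : 0 ≤ (1 - q)^3 * (2 + 6 * q - 3 * q^2) :=
    mul_nonneg (pow_nonneg (sub_nonneg.mpr hq1) 3) (by nlinarith)
  linarith

theorem mapsTo_fiveQubitLevelMap : MapsTo fiveQubitLevelMap (Ioc 0 1) (Ioc 0 1) :=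
  fun _ ⟨hq0, hq1⟩ => ⟨fiveQubitLevelMap_pos hq0 hq1, fiveQubitLevelMap_le_one hq0.le hq1⟩

theorem fiveQubitLevelMap_lt (hq : 0 < q) : fiveQubitLevelMap q < (15/2) * q^2 := by
  have hfactor : fiveQubitLevelMap q - (15/2) * q^2 =
      -q^3 / 2 * (3 * (q - 5/2)^2 + 25/4) := by
    unfold fiveQubitLevelMap; ring
  have : 0 < q^3 / 2 * (3 * (q - 5/2)^2 + 25/4) := by positivity
  linarith

end LevelMap

theorem Set.MapsTo.mem_of_succ_eq {α : Type*} {f : α → α} {s : Set α} {u : ℕ → α}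
    (hf : MapsTo f s s) (h0 : u 0 ∈ s) (hu : ∀ k, u (k + 1) = f (u k)) (k : ℕ) : u k ∈ s := by
  induction k with
  | zero => exact h0
  | succ k ih => exact hu k ▸ hf ih

theorem lt_pow_two_pow_of_lt_sq {α : Type*} [Semiring α] [LinearOrder α] [IsStrictOrderedRing α]
    {r : ℕ → α} (hr : ∀ k, 0 ≤ r k) (hsq : ∀ k, r (k + 1) < r k ^ 2) :
    ∀ k, 1 ≤ k → r k < r 0 ^ 2 ^ k := by
  refine Nat.le_induction (by simpa using hsq 0) fun k _ ih => ?_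
  calc r (k + 1) < r k ^ 2 := hsq k
    _ < (r 0 ^ 2 ^ k) ^ 2 := pow_lt_pow_left₀ ih (hr k) two_ne_zero
    _ = r 0 ^ 2 ^ (k + 1) := by rw [← pow_mul, pow_succ]

/-- Let `p₀ = p` and `p_{k+1} = (15/2)p_k² - (25/2)p_k³ + (15/2)p_k⁴ - (3/2)p_k⁵`.
Then for every `k ≥ 1` and every `0 < p ≤ 1`,
`p_k < (2/15)·((15/2)p)^(2^k)`. -/
theorem concatenated_param_bound (p : ℝ) (hp : 0 < p) (hp1 : p ≤ 1)
    (P : ℕ → ℝ) (h0 : P 0 = p)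
    (hrec : ∀ k, P (k+1) =
      (15/2) * (P k)^2 - (25/2) * (P k)^3 + (15/2) * (P k)^4 - (3/2) * (P k)^5) :
    ∀ k : ℕ, 1 ≤ k → P k < (2/15) * ((15/2) * p) ^ (2 ^ k) := by
  have hmem : ∀ k, P k ∈ Ioc 0 1 :=
    mapsTo_fiveQubitLevelMap.mem_of_succ_eq (h0 ▸ ⟨hp, hp1⟩) hrec
  have hsq : ∀ k, (15/2) * P (k + 1) < ((15/2) * P k) ^ 2 := fun k => by
    have := fiveQubitLevelMap_lt (hmem k).1
    rw [hrec k]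
    unfold fiveQubitLevelMap at this
    linarith
  intro k hk
  have := lt_pow_two_pow_of_lt_sq (r := fun k => (15/2) * P k)
    (fun k => by linarith [(hmem k).1]) hsq k hk
  simp only [h0] at this
  linarith
end

section
/- Main scaling theorem: Let 0 < p < 2/15, let m be a positive integer, and let ε ∈ (0,1]. Define p_0 = p, p_{k+1} = (15/2)p_k^2 - (25/2)p_k^3 + (15/2)p_k^4 - (3/2)p_k^5, and p_total(k,m) = 1 - (1 - p_k)^m. If k ≥ 1 satisfies 5^k > (ln(m/ε))^3 / (-ln(15p/2))^3, then p_total(k,m) < ε. -/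
/-!
Write `q = 15p/2`. The concatenation map `f` satisfies `0 ≤ f x ≤ (15/2) x²` on `[0, 2/15]`, so
`b_j = (15/2) p_j` obeys `b_{j+1} ≤ b_j²` and hence `b_k ≤ q^(2^k)`: the error decays doubly
exponentially. Since `5 ≤ 2³`, the hypothesis on `5^k` gives `ln(m/ε) < 2^k (-ln q)`, i.e.
`q^(2^k) < ε/m`, and the union bound `1 - (1 - x)^m ≤ m x` finishes the proof.
-/

open Set

noncomputable def fiveQubitMap (x : ℝ) : ℝ :=
  (15/2) * x^2 - (25/2) * x^3 + (15/2) * x^4 - (3/2) * x^5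

lemma fiveQubitMap_le {x : ℝ} (hx : 0 ≤ x) : fiveQubitMap x ≤ 15/2 * x^2 := by
  -- `15/2 x² - f x = x³ (3/2 (x - 5/2)² + 25/8)`
  unfold fiveQubitMap
  nlinarith [mul_nonneg (pow_nonneg hx 3) (sq_nonneg (x - 5/2)), pow_nonneg hx 3]

lemma fiveQubitMap_nonneg {x : ℝ} (hx0 : 0 ≤ x) (hx1 : x ≤ 1) : 0 ≤ fiveQubitMap x := by
  unfold fiveQubitMap
  nlinarith [mul_nonneg (sq_nonneg x) (sub_nonneg.2 hx1), pow_nonneg hx0 3,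
    mul_nonneg (pow_nonneg hx0 3) (sub_nonneg.2 hx1), mul_nonneg (pow_nonneg hx0 4) hx0]

lemma fiveQubitMap_mapsTo : MapsTo fiveQubitMap (Icc 0 (2/15)) (Icc 0 (2/15)) := by
  rintro x ⟨hx0, hx1⟩
  refine ⟨fiveQubitMap_nonneg hx0 (by linarith), ?_⟩
  nlinarith [fiveQubitMap_le hx0]

lemma le_pow_two_pow_of_le_sq {R : Type*} [Semiring R] [PartialOrder R] [IsOrderedRing R]
    {b : ℕ → R} (hb : ∀ j, 0 ≤ b j) (hsq : ∀ j, b (j + 1) ≤ b j ^ 2) (j : ℕ) :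
    b j ≤ b 0 ^ 2 ^ j := by
  induction j with
  | zero => simp
  | succ j ih =>
    calc b (j + 1) ≤ b j ^ 2 := hsq j
      _ ≤ (b 0 ^ 2 ^ j) ^ 2 := pow_le_pow_left₀ (hb j) ih 2
      _ = b 0 ^ 2 ^ (j + 1) := by rw [← pow_mul, pow_succ]

lemma lt_two_pow_mul_of_cube_div_lt {L c : ℝ} (hc : 0 < c) {k : ℕ} (h : L^3 / c^3 < 5^k) :
    L < 2^k * c := by
  refine lt_of_pow_lt_pow_left₀ 3 (by positivity) ?_
  calc L^3 < 5^k * c^3 := (div_lt_iff₀ (by positivity)).1 h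
    _ ≤ (2^3)^k * c^3 := by gcongr; norm_num
    _ = (2^k * c)^3 := by rw [mul_pow, ← pow_mul, ← pow_mul, mul_comm 3 k]

lemma pow_lt_inv_of_log_lt {q x : ℝ} (hq : 0 < q) (hx : 0 < x) {n : ℕ}
    (h : Real.log x < n * -Real.log q) : q ^ n < x⁻¹ := by
  rw [← Real.log_lt_log_iff (by positivity) (by positivity), Real.log_pow, Real.log_inv]
  linarith

lemma one_sub_one_sub_pow_le_mul {x : ℝ} (hx : x ≤ 2) (m : ℕ) : 1 - (1 - x)^m ≤ m * x := by
  have := one_add_mul_le_pow (a := -x) (by linarith) m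
  rw [← sub_eq_add_neg] at this
  linarith

theorem main_scaling_general (p ε : ℝ) (m k : ℕ)
    (hp : 0 < p) (hp' : p < 2/15) (hε : 0 < ε) (hm : 0 < m)
    (P : ℕ → ℝ) (h0 : P 0 = p)
    (hrec : ∀ j, P (j+1) =
      (15/2) * (P j)^2 - (25/2) * (P j)^3 + (15/2) * (P j)^4 - (3/2) * (P j)^5)
    (hk : (5:ℝ)^k > (Real.log (m / ε))^3 / (-Real.log (15 * p / 2))^3) :
    1 - (1 - P k)^m < ε := by
  set q : ℝ := 15 * p / 2
  have hq0 : 0 < q := by positivity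
  have hq1 : q < 1 := by simp only [q]; linarith
  have hrec' : ∀ j, P (j + 1) = fiveQubitMap (P j) := hrec
  have hP : ∀ j, P j ∈ Icc 0 (2/15) :=
    Nat.rec (h0 ▸ ⟨hp.le, hp'.le⟩) fun j ih => hrec' j ▸ fiveQubitMap_mapsTo ih
  have hdecay : 15/2 * P k ≤ (15/2 * P 0) ^ 2 ^ k :=
    le_pow_two_pow_of_le_sq (b := fun j => 15/2 * P j) (fun j => by linarith [(hP j).1])
      (fun j => by linarith [hrec' j, fiveQubitMap_le (hP j).1]) k
  rw [show 15/2 * P 0 = q by rw [h0]; ring] at hdecay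
  have hlog : Real.log (m / ε) < 2 ^ k * -Real.log q :=
    lt_two_pow_mul_of_cube_div_lt (neg_pos.2 (Real.log_neg hq0 hq1)) hk
  have hqk : q ^ 2 ^ k < ε / m := by
    simpa using pow_lt_inv_of_log_lt hq0 (x := m / ε) (by positivity) (by exact_mod_cast hlog)
  have hm0 : (0:ℝ) < m := by exact_mod_cast hm
  calc 1 - (1 - P k)^m ≤ m * P k := one_sub_one_sub_pow_le_mul (by linarith [(hP k).2]) m
    _ ≤ m * q ^ 2 ^ k := by gcongr; linarith [(hP k).1]
    _ < ε := by rwa [lt_div_iff₀ hm0, mul_comm] at hqk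

/-- Main scaling theorem. Let `0 < p < 2/15`, `m` a positive integer,
`ε ∈ (0,1]`. With `p₀ = p`,
`p_{k+1} = (15/2)p_k² - (25/2)p_k³ + (15/2)p_k⁴ - (3/2)p_k⁵` and
`p_total(k,m) = 1 - (1 - p_k)^m`, if `k ≥ 1` satisfies
`5^k > (ln(m/ε))³ / (-ln(15p/2))³`, then `p_total(k,m) < ε`. -/
theorem main_scaling (p ε : ℝ) (m k : ℕ)
    (hp : 0 < p) (hp' : p < 2/15) (hε : 0 < ε) (hε1 : ε ≤ 1) (hm : 0 < m)
    (P : ℕ → ℝ) (h0 : P 0 = p)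
    (hrec : ∀ j, P (j+1) =
      (15/2) * (P j)^2 - (25/2) * (P j)^3 + (15/2) * (P j)^4 - (3/2) * (P j)^5)
    (hk1 : 1 ≤ k)
    (hk : (5:ℝ)^k > (Real.log (m / ε))^3 / (-Real.log (15 * p / 2))^3) :
    1 - (1 - P k)^m < ε :=
  main_scaling_general p ε m k hp hp' hε hm P h0 hrec hk
end
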